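/- If a linear system Ax = b with A an m×n matrix and b a vector in ℝ^m, all with rational entries, has a real solution, then the solution of least Euclidean norm has all rational entries. -/

import Mathlib

open Matrix

-- Fredholm-type solvability lemma over ℚ
lemma rat_solvable {m k : ℕ} (M : Matrix (Fin m) (Fin k) ℚ) (c : Fin m → ℚ)
    (h : ∀ u : Fin m → ℚ, Mᵀ.mulVec u = 0 → u ⬝ᵥ c = 0) :
    ∃ w : Fin k → ℚ, M.mulVec w = c := by
  have hc : c ∈ LinearMap.range (Matrix.mulVecLin M) := by
    rw [← Subspace.forall_mem_dualAnnihilator_apply_eq_zero_iff]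
    intro φ hφ
    set u : Fin m → ℚ := fun i => φ (fun j => if i = j then 1 else 0) with hu
    have hrepr : ∀ x : Fin m → ℚ, φ x = u ⬝ᵥ x := by
      intro x
      rw [LinearMap.pi_apply_eq_sum_univ φ x]
      simp [dotProduct, mul_comm, smul_eq_mul, hu]
    have hker : Mᵀ.mulVec u = 0 := by
      funext j
      rw [Submodule.mem_dualAnnihilator] at hφ
      have hcol : φ (M.mulVec (Pi.single j 1)) = 0 :=
        hφ _ ⟨Pi.single j 1, rfl⟩
      rw [hrepr] at hcol
      simp only [Matrix.mulVec_single, mul_one] at hcol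
      simpa [Matrix.mulVec, dotProduct, Matrix.transpose_apply, mul_comm] using hcol
    have := h u hker
    -- φ c = u ⬝ᵥ c = 0
    rw [hrepr]
    exact this
  obtain ⟨w, hw⟩ := hc
  exact ⟨w, hw⟩

lemma cast_mulVec {a b : ℕ} (B : Matrix (Fin a) (Fin b) ℚ) (v : Fin b → ℚ) :
    (fun i => ((B.mulVec v i : ℚ) : ℝ)) =
      (B.map (fun q : ℚ => (q : ℝ))).mulVec (fun j => ((v j : ℚ) : ℝ)) := by
  funext i
  simp only [Matrix.mulVec, dotProduct, Matrix.map_apply]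
  push_cast
  rfl

lemma euclid_inner {k : ℕ} (x y : EuclideanSpace ℝ (Fin k)) :
    inner ℝ x y = (x : Fin k → ℝ) ⬝ᵥ (y : Fin k → ℝ) := by
  simp [PiLp.inner_apply, RCLike.inner_apply, dotProduct, mul_comm]

/-- If a linear system `Ax = b` with rational entries has a real solution, then the
solution of least Euclidean norm has all rational entries. -/
theorem least_norm_solution_rational (m n : ℕ)
    (A : Matrix (Fin m) (Fin n) ℝ) (b : EuclideanSpace ℝ (Fin m))
    (hA : ∀ i j, ∃ q : ℚ, A i j = (q : ℝ))
    (hb : ∀ i, ∃ q : ℚ, b i = (q : ℝ))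
    (hsol : ∃ x : EuclideanSpace ℝ (Fin n), A.mulVec x = b) :
    ∀ y : EuclideanSpace ℝ (Fin n),
      (A.mulVec y = b ∧ ∀ x : EuclideanSpace ℝ (Fin n), A.mulVec x = b → ‖y‖ ≤ ‖x‖) →
      ∀ j, ∃ q : ℚ, y j = (q : ℝ) := by
  classical
  obtain ⟨x, hx⟩ := hsol
  -- rational entries
  set Aq : Matrix (Fin m) (Fin n) ℚ := fun i j => (hA i j).choose with hAq_def
  have hAq : ∀ i j, A i j = ((Aq i j : ℚ) : ℝ) := fun i j => (hA i j).choose_spec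
  set bq : Fin m → ℚ := fun i => (hb i).choose with hbq_def
  have hbq : ∀ i, b i = ((bq i : ℚ) : ℝ) := fun i => (hb i).choose_spec
  have hAmap : A = Aq.map (fun q : ℚ => (q : ℝ)) := by
    funext i j; exact hAq i j
  -- solve (Aq Aqᵀ) w = bq over ℚ
  have key : ∃ w : Fin m → ℚ, (Aq * Aqᵀ).mulVec w = bq := by
    apply rat_solvable
    intro u hu
    have hMsymm : (Aq * Aqᵀ)ᵀ = Aq * Aqᵀ := by
      rw [Matrix.transpose_mul, Matrix.transpose_transpose]
    rw [hMsymm] at hu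
    have h1 : u ⬝ᵥ (Aq * Aqᵀ).mulVec u = 0 := by rw [hu]; simp
    have h2 : (Aqᵀ.mulVec u) ⬝ᵥ (Aqᵀ.mulVec u) = 0 := by
      rw [← Matrix.mulVec_mulVec, Matrix.dotProduct_mulVec, ← Matrix.mulVec_transpose] at h1
      exact h1
    have h3 : Aqᵀ.mulVec u = 0 := dotProduct_self_eq_zero.mp h2
    -- cast to ℝ
    set u' : Fin m → ℝ := fun i => ((u i : ℚ) : ℝ) with hu'
    have h4 : Aᵀ.mulVec u' = 0 := by
      have := cast_mulVec Aqᵀ u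
      rw [h3] at this
      have hmap : Aᵀ = Aqᵀ.map (fun q : ℚ => (q : ℝ)) := by
        rw [hAmap]; rfl
      rw [hmap, ← this]
      funext i; simp
    -- u' ⬝ᵥ b = 0
    have h5 : u' ⬝ᵥ (b : Fin m → ℝ) = 0 := by
      rw [← hx, Matrix.dotProduct_mulVec, ← Matrix.mulVec_transpose, h4]
      simp
    have h6 : ((u ⬝ᵥ bq : ℚ) : ℝ) = u' ⬝ᵥ (b : Fin m → ℝ) := by
      simp only [dotProduct]
      push_cast
      refine Finset.sum_congr rfl fun i _ => ?_
      rw [hbq i]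
    have : ((u ⬝ᵥ bq : ℚ) : ℝ) = 0 := by rw [h6, h5]
    exact_mod_cast this
  obtain ⟨w, hw⟩ := key
  set y₀ : Fin n → ℚ := Aqᵀ.mulVec w with hy₀_def
  set y₀' : Fin n → ℝ := fun j => ((y₀ j : ℚ) : ℝ) with hy₀'
  set w' : Fin m → ℝ := fun i => ((w i : ℚ) : ℝ) with hw'
  have hy₀cast : y₀' = Aᵀ.mulVec w' := by
    have := cast_mulVec Aqᵀ w
    have hmap : Aᵀ = Aqᵀ.map (fun q : ℚ => (q : ℝ)) := by rw [hAmap]; rfl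
    rw [hy₀', hy₀_def, hmap]
    exact this
  -- A y₀' = b
  have hy₀sol : A.mulVec y₀' = b := by
    have h1 : A.mulVec y₀' = fun i => ((((Aq * Aqᵀ).mulVec w) i : ℚ) : ℝ) := by
      rw [hy₀cast, Matrix.mulVec_mulVec]
      have := cast_mulVec (Aq * Aqᵀ) w
      have hmap2 : A * Aᵀ = (Aq * Aqᵀ).map (fun q : ℚ => (q : ℝ)) := by
        rw [hAmap]
        ext i j
        simp only [Matrix.mul_apply, Matrix.map_apply, Matrix.transpose_apply]
        push_cast
        rfl
      rw [hmap2, ← this]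
    funext i
    rw [congrFun h1 i, hw]
    exact (hbq i).symm
  -- y₀' ⊥ ker A
  have hy₀orth : ∀ v : Fin n → ℝ, A.mulVec v = 0 → y₀' ⬝ᵥ v = 0 := by
    intro v hv
    rw [hy₀cast, Matrix.mulVec_transpose, ← Matrix.dotProduct_mulVec, hv]
    simp
  -- main part
  rintro y ⟨hy, hmin⟩ j
  -- y ⊥ ker A
  have hyorth : ∀ v : Fin n → ℝ, A.mulVec v = 0 → (y : Fin n → ℝ) ⬝ᵥ v = 0 := by
    intro v hv
    by_cases hv0 : v = 0
    · rw [hv0]; simp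
    · set vE : EuclideanSpace ℝ (Fin n) := WithLp.toLp 2 v with hvE
      set c : ℝ := inner ℝ y vE with hc
      set s : ℝ := inner ℝ vE vE with hs
      have hspos : 0 < s := by
        rw [hs, euclid_inner]
        obtain ⟨i, hi⟩ : ∃ i, v i ≠ 0 := by
          by_contra hall
          push_neg at hall
          exact hv0 (funext hall)
        apply Finset.sum_pos' (fun j _ => mul_self_nonneg (v j))
        exact ⟨i, Finset.mem_univ i, mul_self_pos.mpr hi⟩
      set t : ℝ := -c / s with ht
      have hxsol : A.mulVec (y + t • vE) = b := by
        have : A.mulVec (y + t • vE) = A.mulVec y + t • A.mulVec vE := by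
          rw [Matrix.mulVec_add, Matrix.mulVec_smul]
        rw [this, hy, hv]  -- A.mulVec vE = A.mulVec v
        simp
      have hle : ‖y‖ ≤ ‖y + t • vE‖ := hmin _ hxsol
      have hle2 : ‖y‖ ^ 2 ≤ ‖y + t • vE‖ ^ 2 := by
        apply pow_le_pow_left₀ (norm_nonneg _) hle 2
      have hexp : ‖y + t • vE‖ ^ 2 = ‖y‖ ^ 2 + 2 * (t * c) + t ^ 2 * s := by
        rw [norm_add_sq_real, real_inner_smul_right, norm_smul, mul_pow,
          ← real_inner_self_eq_norm_sq vE, ← hs, ← hc]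
        simp [sq_abs]
      have hczero : c = 0 := by
        rw [hexp, ht] at hle2
        have h0 : 0 ≤ 2 * (-c / s * c) + (-c / s) ^ 2 * s := by linarith
        have h1 : 2 * (-c / s * c) + (-c / s) ^ 2 * s = -(c ^ 2) / s := by
          field_simp
          ring
        rw [h1] at h0
        have h2 : 0 ≤ -c ^ 2 := by
          have h3 := mul_nonneg h0 hspos.le
          rwa [div_mul_cancel₀ _ hspos.ne'] at h3
        have h4 : c ^ 2 = 0 := le_antisymm (by linarith) (sq_nonneg c)
        exact sq_eq_zero_iff.mp h4
      rw [← hczero, hc, euclid_inner]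
  -- conclude y = y₀'
  set d : Fin n → ℝ := fun i => (y : Fin n → ℝ) i - y₀' i with hd
  have hdker : A.mulVec d = 0 := by
    have h1 : d = (fun i => (y i : ℝ)) - y₀' := by funext i; simp [hd]
    rw [h1, Matrix.mulVec_sub, show A.mulVec (fun i => (y i : ℝ)) = b from hy, hy₀sol]
    simp
  have hdd : d ⬝ᵥ d = 0 := by
    have h1 : (y : Fin n → ℝ) ⬝ᵥ d = 0 := hyorth d hdker
    have h2 : y₀' ⬝ᵥ d = 0 := hy₀orth d hdker
    have : d ⬝ᵥ d = (y : Fin n → ℝ) ⬝ᵥ d - y₀' ⬝ᵥ d := by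
      rw [hd]
      simp [dotProduct, Finset.sum_sub_distrib, sub_mul]
    rw [this, h1, h2, sub_zero]
  have hd0 : d = 0 := dotProduct_self_eq_zero.mp hdd
  have : (y : Fin n → ℝ) j = y₀' j := by
    have := congrFun hd0 j
    simp [hd] at this
    linarith [this]
  exact ⟨y₀ j, this⟩
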